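/- arXiv:2510.11625 — 5 statements merged into one kernel-verified Lean document; each statement's English description precedes it below -/
import Mathlib

section
/- Let E=(V,C,k,A) be an approval-based multiwinner election with n voters and let W ⊆ C with |W| = k. If W fails PJR+ (i.e., there exist ℓ ∈ {1,…,k} and G ⊆ V with |G| ≥ nℓ/k and (⋂_{v∈G} A(v)) ∖ W ≠ ∅ but |W ∩ ⋃_{v∈G} A(v)| < ℓ), then W is not core stable. Equivalently, every core stable committee satisfies PJR+. -/
/-- A committee `W` (of size `k`) satisfies PJR+ for the election `(V, C, k, A)`:
for every `ℓ ∈ {1,…,k}` and every group `G ⊆ V` with `|G| ≥ nℓ/k` such that some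
candidate outside `W` is approved by all members of `G`, the committee contains at
least `ℓ` candidates approved by some member of `G`. -/
def SatisfiesPJRplus {𝒱 𝒞 : Type*} [DecidableEq 𝒞]
    (V : Finset 𝒱) (C : Finset 𝒞) (k : ℕ) (A : 𝒱 → Finset 𝒞) (W : Finset 𝒞) : Prop :=
  W.card = k ∧
    ∀ ℓ : ℕ, 1 ≤ ℓ → ℓ ≤ k →
      ∀ G ⊆ V, ((V.card : ℝ) * ℓ / k ≤ G.card) →
        (∃ c ∈ C, c ∉ W ∧ ∀ v ∈ G, c ∈ A v) →
          ℓ ≤ (W ∩ G.biUnion A).card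

/-- A committee `W` (of size `k`) is core stable for the election `(V, C, k, A)`:
for every `ℓ ∈ {1,…,k}`, every `T ⊆ C` with `|T| ≤ ℓ` and every group `G ⊆ V` with
`|G| ≥ nℓ/k`, some voter `v ∈ G` approves at least as many members of `W` as of `T`. -/
def CoreStable {𝒱 𝒞 : Type*} [DecidableEq 𝒞]
    (V : Finset 𝒱) (C : Finset 𝒞) (k : ℕ) (A : 𝒱 → Finset 𝒞) (W : Finset 𝒞) : Prop :=
  W.card = k ∧
    ∀ ℓ : ℕ, 1 ≤ ℓ → ℓ ≤ k →
      ∀ T ⊆ C, T.card ≤ ℓ →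
        ∀ G ⊆ V, ((V.card : ℝ) * ℓ / k ≤ G.card) →
          ∃ v ∈ G, (T ∩ A v).card ≤ (W ∩ A v).card

/-!
A PJR+ violation by a group `G` at level `ℓ`, witnessed by a candidate `c ∉ W` approved by all
of `G`, yields a core deviation: `T = {c} ∪ (W ∩ ⋃_{v ∈ G} A v)` has at most `ℓ` members, and
every voter of `G` approves all the members of `W` she approved before, and `c` as well.
-/

open Finset

section

variable {𝒱 𝒞 : Type*} [DecidableEq 𝒞]

theorem card_inter_lt_card_insert_inter {s t u : Finset 𝒞} {c : 𝒞}
    (hcu : c ∈ u) (hcs : c ∉ s) (hst : s ∩ u ⊆ t) : #(s ∩ u) < #(insert c t ∩ u) := by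
  have hgrow : insert c (s ∩ u) ⊆ insert c t ∩ u :=
    insert_subset (mem_inter.2 ⟨mem_insert_self c t, hcu⟩)
      (subset_inter (hst.trans (subset_insert c t)) inter_subset_right)
  calc #(s ∩ u) < #(insert c (s ∩ u)) :=
        card_lt_card (ssubset_insert fun h => hcs (mem_inter.1 h).1)
    _ ≤ #(insert c t ∩ u) := card_le_card hgrow

theorem card_inter_lt_card_insert_inter_biUnion {G : Finset 𝒱} {A : 𝒱 → Finset 𝒞}
    {W : Finset 𝒞} {c : 𝒞} {v : 𝒱} (hv : v ∈ G) (hcv : c ∈ A v) (hcW : c ∉ W) :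
    #(W ∩ A v) < #(insert c (W ∩ G.biUnion A) ∩ A v) :=
  card_inter_lt_card_insert_inter hcv hcW (inter_subset_inter_left (subset_biUnion_of_mem A hv))

end

theorem coreStable_implies_PJRplus_general {𝒱 𝒞 : Type*} [DecidableEq 𝒞]
    (V : Finset 𝒱) (C : Finset 𝒞) (k : ℕ)
    (A : 𝒱 → Finset 𝒞)
    (W : Finset 𝒞) (hW : W ⊆ C)
    (hcore : CoreStable V C k A W) :
    SatisfiesPJRplus V C k A W := by
  refine ⟨hcore.1, fun ℓ hℓ1 hℓk G hGV hGcard ⟨c, hcC, hcW, hcG⟩ => ?_⟩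
  by_contra! hfew
  set T := insert c (W ∩ G.biUnion A)
  have hTC : T ⊆ C := insert_subset hcC (inter_subset_left.trans hW)
  have hTcard : #T ≤ ℓ := (card_insert_le _ _).trans hfew
  obtain ⟨v, hvG, hv⟩ := hcore.2 ℓ hℓ1 hℓk T hTC hTcard G hGV hGcard
  exact (card_inter_lt_card_insert_inter_biUnion hvG (hcG v hvG) hcW).not_ge hv

/-- Every core stable committee satisfies PJR+ (equivalently, a committee failing
PJR+ is not core stable). -/
theorem coreStable_implies_PJRplus {𝒱 𝒞 : Type*} [DecidableEq 𝒞]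
    (V : Finset 𝒱) (C : Finset 𝒞) (k : ℕ) (hk : 0 < k)
    (A : 𝒱 → Finset 𝒞) (hA : ∀ v, A v ⊆ C)
    (W : Finset 𝒞) (hW : W ⊆ C) (hWcard : W.card = k)
    (hcore : CoreStable V C k A W) :
    SatisfiesPJRplus V C k A W :=
  coreStable_implies_PJRplus_general V C k A W hW hcore
end

section
/- Let σ ≥ 1, let p_1,…,p_σ ∈ [0,1] with ∑_{t=1}^σ p_t = 1, and let the pair (X,Y) be distributed according to the mixture measure ∑_{t=1}^σ p_t · (U_{[t,t+1]} ⊗ U_{[t,t+1]}), where U_I is the uniform probability measure on the interval I. Let C be a finite subset of ⋃_{t=1}^σ (t, t+1), let S ⊆ C, and let c ∈ C ∖ S with c ∈ (t, t+1). Define c⁻_S = max({s ∈ S : s ≤ c} ∪ {t}) and c⁺_S = min({s ∈ S : s ≥ c} ∪ {t+1}). Then Pr[ min(X,Y) ≤ c ≤ max(X,Y) and [min(X,Y), max(X,Y)] ∩ S = ∅ ] = 2 p_t (c − c⁻_S)(c⁺_S − c). -/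
/-!
Only the component of the mixture living on the segment `[t, t + 1]` that contains `c` can
produce a hull `[min X Y, max X Y]` containing `c`. Inside the square `[t, t + 1]²`, such a hull
avoids `S` essentially iff `min X Y ∈ (c⁻, c)` and `max X Y ∈ (c, c⁺)`: the event is squeezed
between the open and the closed version of this condition, and both describe a rectangle and
its mirror image, of total area `2 (c − c⁻) (c⁺ − c)`.
-/

open MeasureTheory

/-- The distribution of the pair of endpoints `(X, Y)` of a random voter in the uniform
RIV model with `σ` segments and segment probabilities `p 1, …, p σ`: the mixture
`∑ t, p t • (U_{[t,t+1]} ⊗ U_{[t,t+1]})` where `U_I` is the uniform measure on `I`. -/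
noncomputable def rivMeasure (σ : ℕ) (p : ℕ → ℝ) : Measure (ℝ × ℝ) :=
  ∑ t ∈ Finset.Icc 1 σ,
    ENNReal.ofReal (p t) •
      ((volume.restrict (Set.Icc (t : ℝ) (t + 1))).prod
        (volume.restrict (Set.Icc (t : ℝ) (t + 1))))

open Set

section LinearOrder

variable {α : Type*} [LinearOrder α]

/-- For `l = t` this is the paper's `c⁻_S`. -/
def lowerNeighbor (S : Finset α) (c l : α) : α :=
  (insert l (S.filter (fun s => s ≤ c))).max' (Finset.insert_nonempty _ _)

/-- For `u = t + 1` this is the paper's `c⁺_S`. -/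
def upperNeighbor (S : Finset α) (c u : α) : α :=
  (insert u (S.filter (fun s => c ≤ s))).min' (Finset.insert_nonempty _ _)

variable {S : Finset α} {c l u s x : α}

theorem lowerNeighbor_le_iff :
    lowerNeighbor S c l ≤ x ↔ l ≤ x ∧ ∀ s ∈ S, s ≤ c → s ≤ x := by
  simp [lowerNeighbor, Finset.max'_le_iff]

theorem le_upperNeighbor_iff :
    x ≤ upperNeighbor S c u ↔ x ≤ u ∧ ∀ s ∈ S, c ≤ s → x ≤ s := by
  simp [upperNeighbor, Finset.le_min'_iff]

theorem le_lowerNeighbor : l ≤ lowerNeighbor S c l :=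
  Finset.le_max' _ _ (Finset.mem_insert_self _ _)

theorem upperNeighbor_le : upperNeighbor S c u ≤ u :=
  Finset.min'_le _ _ (Finset.mem_insert_self _ _)

theorem lowerNeighbor_le (hlc : l ≤ c) : lowerNeighbor S c l ≤ c :=
  lowerNeighbor_le_iff.2 ⟨hlc, fun _ _ h => h⟩

theorem le_upperNeighbor (hcu : c ≤ u) : c ≤ upperNeighbor S c u :=
  le_upperNeighbor_iff.2 ⟨hcu, fun _ _ h => h⟩

theorem le_lowerNeighbor_of_mem (hs : s ∈ S) (hsc : s ≤ c) : s ≤ lowerNeighbor S c l :=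
  Finset.le_max' _ _ (Finset.mem_insert_of_mem (Finset.mem_filter.2 ⟨hs, hsc⟩))

theorem upperNeighbor_le_of_mem (hs : s ∈ S) (hcs : c ≤ s) : upperNeighbor S c u ≤ s :=
  Finset.min'_le _ _ (Finset.mem_insert_of_mem (Finset.mem_filter.2 ⟨hs, hcs⟩))

def approvesAvoiding (c : α) (S : Finset α) : Set (α × α) :=
  {xy | (min xy.1 xy.2 ≤ c ∧ c ≤ max xy.1 xy.2) ∧
    ∀ s ∈ S, ¬ (min xy.1 xy.2 ≤ s ∧ s ≤ max xy.1 xy.2)}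

theorem approvesAvoiding_inter_box_eq_empty (hc : c ∉ Icc l u) :
    approvesAvoiding c S ∩ Icc l u ×ˢ Icc l u = ∅ := by
  refine eq_empty_of_forall_notMem ?_
  rintro ⟨x, y⟩ ⟨⟨⟨hmin, hmax⟩, -⟩, ⟨hlx, hxu⟩, ⟨hly, hyu⟩⟩
  exact hc ⟨(le_min hlx hly).trans hmin, hmax.trans (max_le hxu hyu)⟩

theorem approvesAvoiding_inter_box_subset :
    approvesAvoiding c S ∩ Icc l u ×ˢ Icc l u ⊆
      {xy | min xy.1 xy.2 ∈ Icc (lowerNeighbor S c l) c ∧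
        max xy.1 xy.2 ∈ Icc c (upperNeighbor S c u)} := by
  rintro ⟨x, y⟩ ⟨⟨⟨hmin, hmax⟩, hS⟩, ⟨hlx, hxu⟩, ⟨hly, hyu⟩⟩
  refine ⟨⟨lowerNeighbor_le_iff.2 ⟨le_min hlx hly, fun s hs hsc => ?_⟩, hmin⟩,
    ⟨hmax, le_upperNeighbor_iff.2 ⟨max_le hxu hyu, fun s hs hcs => ?_⟩⟩⟩
  · exact le_of_not_ge fun h => hS s hs ⟨h, hsc.trans hmax⟩
  · exact le_of_not_ge fun h => hS s hs ⟨hmin.trans hcs, h⟩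

theorem subset_approvesAvoiding_inter_box :
    {xy : α × α | min xy.1 xy.2 ∈ Ioo (lowerNeighbor S c l) c ∧
        max xy.1 xy.2 ∈ Ioo c (upperNeighbor S c u)} ⊆
      approvesAvoiding c S ∩ Icc l u ×ˢ Icc l u := by
  rintro ⟨x, y⟩ ⟨⟨hlo, hmin⟩, ⟨hmax, hhi⟩⟩
  have hl : l < min x y := le_lowerNeighbor.trans_lt hlo
  have hu : max x y < u := hhi.trans_le upperNeighbor_le
  refine ⟨⟨⟨hmin.le, hmax.le⟩, fun s hs ⟨hs₁, hs₂⟩ => ?_⟩,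
    ⟨(lt_min_iff.1 hl).1.le, (max_lt_iff.1 hu).1.le⟩,
    ⟨(lt_min_iff.1 hl).2.le, (max_lt_iff.1 hu).2.le⟩⟩
  rcases le_total s c with hsc | hcs
  · exact (le_lowerNeighbor_of_mem hs hsc).not_gt (hlo.trans_le hs₁)
  · exact (upperNeighbor_le_of_mem hs hcs).not_gt (hs₂.trans_lt hhi)

theorem setOf_min_mem_max_mem_eq {I J : Set α} (hIJ : ∀ x ∈ I, ∀ y ∈ J, x ≤ y) :
    {xy : α × α | min xy.1 xy.2 ∈ I ∧ max xy.1 xy.2 ∈ J} = I ×ˢ J ∪ J ×ˢ I := by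
  ext ⟨x, y⟩
  rcases le_total x y with h | h
  · simp only [mem_ofPred_eq, min_eq_left h, max_eq_right h, mem_union, mem_prod]
    refine ⟨Or.inl, Or.rec id fun ⟨hxJ, hyI⟩ => ?_⟩
    obtain rfl := le_antisymm h (hIJ y hyI x hxJ)
    exact ⟨hyI, hxJ⟩
  · simp only [mem_ofPred_eq, min_eq_right h, max_eq_left h, mem_union, mem_prod]
    refine ⟨fun hyx => Or.inr hyx.symm, Or.rec (fun ⟨hxI, hyJ⟩ => ?_) And.symm⟩
    obtain rfl := le_antisymm h (hIJ x hxI y hyJ)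
    exact ⟨hxI, hyJ⟩

end LinearOrder

section Real

theorem volume_setOf_min_mem_Ioo_max_mem_Ioo {a c b : ℝ} (hcb : c ≤ b) :
    volume {xy : ℝ × ℝ | min xy.1 xy.2 ∈ Ioo a c ∧ max xy.1 xy.2 ∈ Ioo c b} =
      ENNReal.ofReal (2 * (c - a) * (b - c)) := by
  have hdisj : Disjoint (Ioo a c ×ˢ Ioo c b) (Ioo c b ×ˢ Ioo a c) :=
    disjoint_prod.2 (Or.inl (disjoint_left.2 fun x hx hx' => (hx.2.trans hx'.1).false))
  rw [setOf_min_mem_max_mem_eq (fun x hx y hy => hx.2.le.trans hy.1.le),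
    measure_union hdisj (measurableSet_Ioo.prod measurableSet_Ioo), Measure.volume_eq_prod,
    Measure.prod_prod, Measure.prod_prod, Real.volume_Ioo, Real.volume_Ioo, mul_comm,
    ← two_mul, ← ENNReal.ofReal_mul (sub_nonneg.2 hcb), ← ENNReal.ofReal_ofNat 2,
    ← ENNReal.ofReal_mul zero_le_two]
  congr 1
  ring

theorem volume_setOf_min_mem_Icc_max_mem_Icc_le {a c b : ℝ} (hcb : c ≤ b) :
    volume {xy : ℝ × ℝ | min xy.1 xy.2 ∈ Icc a c ∧ max xy.1 xy.2 ∈ Icc c b} ≤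
      ENNReal.ofReal (2 * (c - a) * (b - c)) := by
  rw [setOf_min_mem_max_mem_eq (fun x hx y hy => hx.2.trans hy.1)]
  refine (measure_union_le _ _).trans_eq ?_
  rw [Measure.volume_eq_prod, Measure.prod_prod, Measure.prod_prod, Real.volume_Icc,
    Real.volume_Icc, mul_comm, ← two_mul, ← ENNReal.ofReal_mul (sub_nonneg.2 hcb),
    ← ENNReal.ofReal_ofNat 2, ← ENNReal.ofReal_mul zero_le_two]
  congr 1
  ring

theorem measurableSet_approvesAvoiding (c : ℝ) (S : Finset ℝ) :
    MeasurableSet (approvesAvoiding c S) := by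
  have hhull : ∀ s : ℝ, MeasurableSet {xy : ℝ × ℝ | min xy.1 xy.2 ≤ s ∧ s ≤ max xy.1 xy.2} :=
    fun s => (measurableSet_le (measurable_fst.min measurable_snd) measurable_const).inter
      (measurableSet_le measurable_const (measurable_fst.max measurable_snd))
  have hE : approvesAvoiding c S =
      {xy | min xy.1 xy.2 ≤ c ∧ c ≤ max xy.1 xy.2} ∩
        ⋂ s ∈ S, {xy : ℝ × ℝ | min xy.1 xy.2 ≤ s ∧ s ≤ max xy.1 xy.2}ᶜ := by
    ext xy
    simp [approvesAvoiding]
  rw [hE]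
  exact (hhull c).inter (Finset.measurableSet_biInter S fun s _ => (hhull s).compl)

theorem volume_approvesAvoiding_inter_box {S : Finset ℝ} {c l u : ℝ} (hcu : c ≤ u) :
    volume (approvesAvoiding c S ∩ Icc l u ×ˢ Icc l u) =
      ENNReal.ofReal (2 * (c - lowerNeighbor S c l) * (upperNeighbor S c u - c)) := by
  have hhi : c ≤ upperNeighbor S c u := le_upperNeighbor hcu
  refine le_antisymm ?_ ?_
  · exact (measure_mono approvesAvoiding_inter_box_subset).trans
      (volume_setOf_min_mem_Icc_max_mem_Icc_le hhi)
  · rw [← volume_setOf_min_mem_Ioo_max_mem_Ioo hhi]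
    exact measure_mono subset_approvesAvoiding_inter_box

theorem notMem_Icc_natCast_of_mem_Ioo {c : ℝ} {t a : ℕ} (hc : c ∈ Ioo (t : ℝ) (t + 1))
    (hat : a ≠ t) : c ∉ Icc (a : ℝ) (a + 1) := by
  rintro ⟨hac, hca⟩
  rcases hat.lt_or_gt with h | h
  · have : (a : ℝ) + 1 ≤ t := by exact_mod_cast h
    linarith [hc.1]
  · have : (t : ℝ) + 1 ≤ a := by exact_mod_cast h
    linarith [hc.2]

theorem rivMeasure_apply_eq_of_inter_eq_empty {σ t : ℕ} {p : ℕ → ℝ} {E : Set (ℝ × ℝ)}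
    (hE : MeasurableSet E) (ht : t ∈ Finset.Icc 1 σ)
    (hoff : ∀ a ∈ Finset.Icc 1 σ, a ≠ t → E ∩ Icc (a : ℝ) (a + 1) ×ˢ Icc (a : ℝ) (a + 1) = ∅) :
    rivMeasure σ p E =
      ENNReal.ofReal (p t) * volume (E ∩ Icc (t : ℝ) (t + 1) ×ˢ Icc (t : ℝ) (t + 1)) := by
  have hbox : ∀ a : ℕ, ((volume.restrict (Icc (a : ℝ) (a + 1))).prod
      (volume.restrict (Icc (a : ℝ) (a + 1)))) E =
        volume (E ∩ Icc (a : ℝ) (a + 1) ×ˢ Icc (a : ℝ) (a + 1)) := fun a => by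
    rw [Measure.prod_restrict, Measure.restrict_apply hE, Measure.volume_eq_prod]
  rw [rivMeasure, Measure.finsetSum_apply, Finset.sum_eq_single_of_mem t ht fun a ha hat => ?_]
  · rw [Measure.smul_apply, smul_eq_mul, hbox]
  · rw [Measure.smul_apply, smul_eq_mul, hbox, hoff a ha hat, measure_empty, mul_zero]

end Real

theorem riv_approval_probability_general
    (σ : ℕ) (p : ℕ → ℝ)
    (S : Finset ℝ)
    (c : ℝ)
    (t : ℕ) (ht : t ∈ Finset.Icc 1 σ) (hct : c ∈ Set.Ioo (t : ℝ) (t + 1))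
    (cminus cplus : ℝ)
    (hcminus : cminus = (insert (t : ℝ) (S.filter (fun s => s ≤ c))).max'
      (Finset.insert_nonempty _ _))
    (hcplus : cplus = (insert ((t : ℝ) + 1) (S.filter (fun s => c ≤ s))).min'
      (Finset.insert_nonempty _ _)) :
    rivMeasure σ p
        {xy : ℝ × ℝ |
          (min xy.1 xy.2 ≤ c ∧ c ≤ max xy.1 xy.2) ∧
            ∀ s ∈ S, ¬ (min xy.1 xy.2 ≤ s ∧ s ≤ max xy.1 xy.2)} =
      ENNReal.ofReal (2 * p t * (c - cminus) * (cplus - c)) := by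
  obtain rfl : lowerNeighbor S c t = cminus := hcminus.symm
  obtain rfl : upperNeighbor S c (t + 1) = cplus := hcplus.symm
  have hgap : 0 ≤ 2 * (c - lowerNeighbor S c t) * (upperNeighbor S c (t + 1) - c) :=
    mul_nonneg (mul_nonneg zero_le_two (sub_nonneg.2 (lowerNeighbor_le hct.1.le)))
      (sub_nonneg.2 (le_upperNeighbor hct.2.le))
  change rivMeasure σ p (approvesAvoiding c S) = _
  rw [rivMeasure_apply_eq_of_inter_eq_empty (measurableSet_approvesAvoiding c S) ht
      fun a _ hat => approvesAvoiding_inter_box_eq_empty (notMem_Icc_natCast_of_mem_Ioo hct hat),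
    volume_approvesAvoiding_inter_box hct.2.le, ← ENNReal.ofReal_mul' hgap]
  congr 1
  ring

/-- The probability (under the uniform RIV mixture) that a random voter approves the
candidate `c` and none of the candidates in `S` equals `2 p_t (c − c⁻_S)(c⁺_S − c)`. -/
theorem riv_approval_probability
    (σ : ℕ) (p : ℕ → ℝ)
    (hp0 : ∀ t ∈ Finset.Icc 1 σ, 0 ≤ p t) (hp1 : ∀ t ∈ Finset.Icc 1 σ, p t ≤ 1)
    (hpsum : ∑ t ∈ Finset.Icc 1 σ, p t = 1)
    (C : Finset ℝ)
    (hC : ∀ x ∈ C, ∃ t ∈ Finset.Icc 1 σ, x ∈ Set.Ioo (t : ℝ) (t + 1))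
    (S : Finset ℝ) (hS : S ⊆ C)
    (c : ℝ) (hcC : c ∈ C) (hcS : c ∉ S)
    (t : ℕ) (ht : t ∈ Finset.Icc 1 σ) (hct : c ∈ Set.Ioo (t : ℝ) (t + 1))
    (cminus cplus : ℝ)
    (hcminus : cminus = (insert (t : ℝ) (S.filter (fun s => s ≤ c))).max'
      (Finset.insert_nonempty _ _))
    (hcplus : cplus = (insert ((t : ℝ) + 1) (S.filter (fun s => c ≤ s))).min'
      (Finset.insert_nonempty _ _)) :
    rivMeasure σ p
        {xy : ℝ × ℝ |
          (min xy.1 xy.2 ≤ c ∧ c ≤ max xy.1 xy.2) ∧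
            ∀ s ∈ S, ¬ (min xy.1 xy.2 ≤ s ∧ s ≤ max xy.1 xy.2)} =
      ENNReal.ofReal (2 * p t * (c - cminus) * (cplus - c)) :=
  riv_approval_probability_general σ p S c t ht hct cminus cplus hcminus hcplus
end

section
/- Fix a segment t ∈ {1,…,σ} of a uniform RIV model with segment probability p_t, a finite candidate set C_t ⊂ (t, t+1), and an integer k_t ≥ 0 with |C_t| ≥ k_t, and let Ŵ_t be the greedy committee for segment t. Then for every c ∈ C_t ∖ Ŵ_t and all integers r₁, r₂ ≥ 0, the probability (over a random voter of the uniform RIV model) that the voter's approval interval contains c, contains at most r₁ points of Ŵ_t strictly to the left of c, and contains at most r₂ points of Ŵ_t strictly to the right of c, equals 2 p_t · d⁻_{r₁}(c) · d⁺_{r₂}(c). -/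
/-!
Only voters of segment `t` can approve `c ∈ (t, t+1)`. For such a voter with interval `[x, y]`,
`x ≤ c ≤ y`, the committee members in `[x, c)` number `ρ(c) - ρ(x)`, so at most `r₁` of them lie
there exactly when `x` is to the right of the `(r₁+1)`-th member left of `c` (or `x ≥ t` if there
is none), i.e. `x ∈ (c - d⁻_{r₁}(c), c]`; symmetrically `y ∈ [c, c + d⁺_{r₂}(c))`. Up to null sets
the event is the rectangle `(c - d⁻, c) × (c, c + d⁺)` together with its mirror image, of total
area `2 d⁻ d⁺`.
-/

open MeasureTheory

/-- The `ξ`-th marked point of segment `t`: `t + (2ξ−1)/(2(k_t+2))`. -/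
noncomputable def markedPoint (t kt : ℕ) (ξ : ℕ) : ℝ :=
  (t : ℝ) + (2 * (ξ : ℝ) - 1) / (2 * ((kt : ℝ) + 2))

/-- `w 2, …, w (kt+1)` is a greedy committee for segment `t` with candidate set `Ct`:
for each `ξ = 2, …, kt+1`, `w ξ` is a candidate not chosen before that is closest to
the marked point `m_ξ` among all not-yet-chosen candidates. -/
def IsGreedyCommittee (t kt : ℕ) (Ct : Finset ℝ) (w : ℕ → ℝ) : Prop :=
  ∀ ξ ∈ Finset.Icc 2 (kt + 1),
    w ξ ∈ Ct ∧ w ξ ∉ (Finset.Icc 2 (ξ - 1)).image w ∧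
      ∀ c' ∈ Ct, c' ∉ (Finset.Icc 2 (ξ - 1)).image w →
        |w ξ - markedPoint t kt ξ| ≤ |c' - markedPoint t kt ξ|

/-- `rank W c = ρ(c)`: the number of points of `W` strictly to the left of `c`. -/
noncomputable def rank (W : Finset ℝ) (c : ℝ) : ℕ :=
  (W.filter (fun x => x < c)).card

/-- `dPlus t kt W c r = d⁺_r(c)`: the distance from `c` to the `(r+1)`-th element of `W`
to the right of `c` (elements of `W` listed in increasing order), or to the right
endpoint `t+1` of the segment if no such element exists. -/
noncomputable def dPlus (t kt : ℕ) (W : Finset ℝ) (c : ℝ) (r : ℕ) : ℝ :=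
  if rank W c + r < kt then (W.sort (· ≤ ·)).getD (rank W c + r) 0 - c
  else ((t : ℝ) + 1) - c

/-- `dMinus t W c r = d⁻_r(c)`: the distance from `c` to the `(r+1)`-th element of `W`
to the left of `c`, or to the left endpoint `t` of the segment if no such element exists. -/
noncomputable def dMinus (t : ℕ) (W : Finset ℝ) (c : ℝ) (r : ℕ) : ℝ :=
  if r + 1 ≤ rank W c then c - (W.sort (· ≤ ·)).getD (rank W c - r - 1) 0
  else c - (t : ℝ)

/-- The event that a voter with endpoint pair `xy` approves `c`, approves at most `r₁`
elements of `W` strictly to the left of `c`, and at most `r₂` elements of `W` strictly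
to the right of `c` (the voter's approval interval is `[min xy, max xy]`). -/
def approvalEvent (W : Finset ℝ) (c : ℝ) (r₁ r₂ : ℕ) : Set (ℝ × ℝ) :=
  {xy | (min xy.1 xy.2 ≤ c ∧ c ≤ max xy.1 xy.2) ∧
    (W.filter (fun x => x < c ∧ min xy.1 xy.2 ≤ x ∧ x ≤ max xy.1 xy.2)).card ≤ r₁ ∧
    (W.filter (fun x => c < x ∧ min xy.1 xy.2 ≤ x ∧ x ≤ max xy.1 xy.2)).card ≤ r₂}

/-- `segmentMiddle t kt Ct = K_t`: the candidates of `C_t` lying in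
`(t + 3/(2(k_t+2)), t + 1 − 3/(2(k_t+2)))`. -/
noncomputable def segmentMiddle (t kt : ℕ) (Ct : Finset ℝ) : Finset ℝ :=
  Ct.filter (fun x =>
    (t : ℝ) + 3 / (2 * ((kt : ℝ) + 2)) < x ∧ x < (t : ℝ) + 1 - 3 / (2 * ((kt : ℝ) + 2)))

open scoped Finset

open Finset in
lemma Fin.lt_card_filter_iff_of_antitone {n : ℕ} {Q : Fin n → Prop} [DecidablePred Q]
    (hQ : Antitone Q) (i : Fin n) :
    (i : ℕ) < #(univ.filter Q) ↔ Q i := by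
  constructor
  · intro hi
    by_contra hQi
    have hsub : univ.filter Q ⊆ Iio i := fun j hj =>
      mem_Iio.2 (lt_of_not_ge fun hij => hQi (hQ hij (mem_filter.1 hj).2))
    have := card_le_card hsub
    rw [Fin.card_Iio] at this
    omega
  · intro hQi
    have hsub : Iic i ⊆ univ.filter Q := fun j hj =>
      mem_filter.2 ⟨mem_univ _, hQ (mem_Iic.1 hj) hQi⟩
    have := card_le_card hsub
    rw [Fin.card_Iic] at this
    omega

namespace Finset

lemma card_filter_and_not_add_card_filter {α : Type*} (W : Finset α) {P Q : α → Prop}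
    [DecidablePred P] [DecidablePred Q] (hPQ : ∀ a, P a → Q a) :
    #(W.filter fun a => Q a ∧ ¬P a) + #(W.filter P) = #(W.filter Q) := by
  rw [add_comm, ← card_filter_add_card_filter_not (s := W.filter Q) P, filter_filter, filter_filter]
  congr 2
  exact filter_congr fun a _ => ⟨fun h => ⟨hPQ a h, h⟩, And.right⟩

variable {α : Type*} [LinearOrder α] (W : Finset α)

lemma sort_getD_mem (d : α) {i : ℕ} (hi : i < #W) : (W.sort (· ≤ ·)).getD i d ∈ W := by
  rw [List.getD_eq_getElem _ _ (by rwa [length_sort])]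
  exact (mem_sort _).1 (List.getElem_mem _)

lemma lt_card_filter_iff_sort_getD {P : α → Prop} [DecidablePred P]
    (hP : Antitone P) (d : α) {i : ℕ} (hi : i < #W) :
    i < #(W.filter P) ↔ P ((W.sort (· ≤ ·)).getD i d) := by
  classical
  set e := W.orderEmbOfFin rfl
  have hcard : #(W.filter P) = #(univ.filter (fun j => P (e j))) := by
    conv_lhs => rw [← W.image_orderEmbOfFin_univ rfl, filter_image]
    exact card_image_of_injective _ e.injective
  have key := Fin.lt_card_filter_iff_of_antitone (fun j k hjk => hP (e.monotone hjk)) ⟨i, hi⟩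
  rw [← hcard, W.orderEmbOfFin_apply] at key
  rw [List.getD_eq_getElem _ _ (by rwa [length_sort])]
  exact key

end Finset

section Counting

variable (W : Finset ℝ) {c : ℝ}

lemma card_filter_Ico_le_iff {a : ℝ} (hac : a ≤ c) (d : ℝ) (r : ℕ) :
    #(W.filter fun q => a ≤ q ∧ q < c) ≤ r ↔
      (r + 1 ≤ rank W c → (W.sort (· ≤ ·)).getD (rank W c - r - 1) d < a) := by
  have hsplit := W.card_filter_and_not_add_card_filter (P := fun q => q < a) (Q := fun q => q < c)
    fun q hq => hq.trans_le hac
  have hcongr : W.filter (fun q => a ≤ q ∧ q < c) = W.filter (fun q => q < c ∧ ¬q < a) :=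
    Finset.filter_congr fun q _ => by rw [not_lt, and_comm]
  have hrank : rank W c ≤ #W := Finset.card_filter_le _ _
  have hsort := fun hr : r + 1 ≤ rank W c => W.lt_card_filter_iff_sort_getD (P := fun q => q < a)
    (fun x y hxy hy => hxy.trans_lt hy) d (i := rank W c - r - 1) (by omega)
  rw [hcongr]
  unfold rank at *
  constructor
  · intro h hr
    rw [← hsort hr]
    omega
  · intro h
    by_cases hr : r + 1 ≤ #(W.filter fun q => q < c)
    · have := (hsort hr).2 (h hr)
      omega
    · omega

lemma card_filter_Ioc_le_iff (hcW : c ∉ W) {b : ℝ} (hcb : c ≤ b) (d : ℝ) (r : ℕ) :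
    #(W.filter fun q => c < q ∧ q ≤ b) ≤ r ↔
      (rank W c + r < #W → b < (W.sort (· ≤ ·)).getD (rank W c + r) d) := by
  have hsplit := W.card_filter_and_not_add_card_filter (P := fun q => q ≤ c) (Q := fun q => q ≤ b)
    fun q hq => hq.trans hcb
  have hcongr : W.filter (fun q => c < q ∧ q ≤ b) = W.filter (fun q => q ≤ b ∧ ¬q ≤ c) :=
    Finset.filter_congr fun q _ => by rw [not_le, and_comm]
  have hrank : #(W.filter fun q => q ≤ c) = rank W c :=
    congrArg Finset.card <| Finset.filter_congr fun q hq => (ne_of_mem_of_not_mem hq hcW).le_iff_lt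
  have hle : #(W.filter fun q => q ≤ b) ≤ #W := Finset.card_filter_le _ _
  rw [hcongr]
  constructor
  · intro h hr
    rw [← not_le, ← W.lt_card_filter_iff_sort_getD (fun x y hxy hy => hxy.trans hy) d hr]
    omega
  · intro h
    by_cases hr : rank W c + r < #W
    · have := mt (W.lt_card_filter_iff_sort_getD (P := fun q => q ≤ b)
        (fun x y hxy hy => hxy.trans hy) d hr).1 (not_le.2 (h hr))
      omega
    · omega

end Counting

section Distances

lemma sub_dMinus_eq (t : ℕ) (W : Finset ℝ) (c : ℝ) (r : ℕ) :
    c - dMinus t W c r =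
      if r + 1 ≤ rank W c then (W.sort (· ≤ ·)).getD (rank W c - r - 1) 0 else (t : ℝ) := by
  unfold dMinus
  split_ifs <;> ring

lemma add_dPlus_eq (t : ℕ) (W : Finset ℝ) (c : ℝ) (r : ℕ) :
    c + dPlus t #W W c r =
      if rank W c + r < #W then (W.sort (· ≤ ·)).getD (rank W c + r) 0 else (t : ℝ) + 1 := by
  unfold dPlus
  split_ifs <;> ring

variable {t : ℕ} {W : Finset ℝ} {c : ℝ} {r : ℕ}

lemma card_filter_Ico_le_of_sub_dMinus_lt {a : ℝ} (ha : c - dMinus t W c r < a) (hac : a ≤ c) :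
    #(W.filter fun q => a ≤ q ∧ q < c) ≤ r := by
  rw [card_filter_Ico_le_iff W hac 0]
  intro hr
  rwa [sub_dMinus_eq, if_pos hr] at ha

lemma sub_dMinus_le_of_card_filter_Ico_le {a : ℝ} (hta : (t : ℝ) ≤ a) (hac : a ≤ c)
    (h : #(W.filter fun q => a ≤ q ∧ q < c) ≤ r) : c - dMinus t W c r ≤ a := by
  rw [card_filter_Ico_le_iff W hac 0] at h
  rw [sub_dMinus_eq]
  split_ifs with hr
  exacts [(h hr).le, hta]

lemma card_filter_Ioc_le_of_lt_add_dPlus (hcW : c ∉ W) {b : ℝ} (hb : b < c + dPlus t #W W c r)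
    (hcb : c ≤ b) : #(W.filter fun q => c < q ∧ q ≤ b) ≤ r := by
  rw [card_filter_Ioc_le_iff W hcW hcb 0]
  intro hr
  rwa [add_dPlus_eq, if_pos hr] at hb

lemma le_add_dPlus_of_card_filter_Ioc_le (hcW : c ∉ W) {b : ℝ} (hbt : b ≤ (t : ℝ) + 1)
    (hcb : c ≤ b) (h : #(W.filter fun q => c < q ∧ q ≤ b) ≤ r) : b ≤ c + dPlus t #W W c r := by
  rw [card_filter_Ioc_le_iff W hcW hcb 0] at h
  rw [add_dPlus_eq]
  split_ifs with hr
  exacts [(h hr).le, hbt]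

lemma dMinus_nonneg (htc : (t : ℝ) ≤ c) : 0 ≤ dMinus t W c r := by
  have := sub_dMinus_le_of_card_filter_Ico_le (W := W) (r := r) htc le_rfl
    (by rw [Finset.filter_false_of_mem fun q _ h => (not_lt.2 h.1) h.2]; simp)
  linarith

lemma dPlus_nonneg (hcW : c ∉ W) (hct : c ≤ (t : ℝ) + 1) : 0 ≤ dPlus t #W W c r := by
  have := le_add_dPlus_of_card_filter_Ioc_le (r := r) hcW hct le_rfl
    (by rw [Finset.filter_false_of_mem fun q _ h => (not_lt.2 h.2) h.1]; simp)
  linarith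

lemma le_sub_dMinus (hW : ∀ x ∈ W, (t : ℝ) ≤ x) : (t : ℝ) ≤ c - dMinus t W c r := by
  have hrank : rank W c ≤ #W := Finset.card_filter_le _ _
  rw [sub_dMinus_eq]
  split_ifs with hr
  exacts [hW _ (W.sort_getD_mem 0 (by omega)), le_rfl]

lemma add_dPlus_le (hW : ∀ x ∈ W, x ≤ (t : ℝ) + 1) : c + dPlus t #W W c r ≤ (t : ℝ) + 1 := by
  rw [add_dPlus_eq]
  split_ifs with hr
  exacts [hW _ (W.sort_getD_mem 0 (by omega)), le_rfl]

end Distances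

section Measure

open Set

lemma volume_prod_eq_of_swap_mem {E : Set (ℝ × ℝ)} {L c R : ℝ} (hLc : L ≤ c) (hcR : c ≤ R)
    (hswap : ∀ x y, (x, y) ∈ E → (y, x) ∈ E) (hin : Ioo L c ×ˢ Ioo c R ⊆ E)
    (hout : ∀ x y, x ≤ y → (x, y) ∈ E → x ∈ Icc L c ∧ y ∈ Icc c R) :
    (volume.prod volume) E = ENNReal.ofReal (2 * (c - L) * (R - c)) := by
  have hinner : Ioo L c ×ˢ Ioo c R ∪ Ioo c R ×ˢ Ioo L c ⊆ E := by
    rintro ⟨x, y⟩ (h | ⟨hx, hy⟩)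
    exacts [hin h, hswap _ _ (hin ⟨hy, hx⟩)]
  have houter : E ⊆ Icc L c ×ˢ Icc c R ∪ Icc c R ×ˢ Icc L c := by
    rintro ⟨x, y⟩ hxy
    rcases le_total x y with h | h
    exacts [Or.inl (hout x y h hxy), Or.inr (hout y x h (hswap _ _ hxy)).symm]
  have hdisj : Disjoint (Ioo L c ×ˢ Ioo c R) (Ioo c R ×ˢ Ioo L c) :=
    disjoint_left.2 fun _ h h' => (h.1.2.trans h'.1.1).false
  have hsum : ENNReal.ofReal (c - L) * ENNReal.ofReal (R - c) +
      ENNReal.ofReal (R - c) * ENNReal.ofReal (c - L) =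
      ENNReal.ofReal (2 * (c - L) * (R - c)) := by
    rw [← ENNReal.ofReal_mul (by linarith), ← ENNReal.ofReal_mul (by linarith),
      ← ENNReal.ofReal_add (by nlinarith) (by nlinarith)]
    ring_nf
  apply le_antisymm
  · calc (volume.prod volume) E
        ≤ (volume.prod volume) (Icc L c ×ˢ Icc c R ∪ Icc c R ×ˢ Icc L c) := measure_mono houter
      _ ≤ _ := measure_union_le _ _
      _ = _ := by simp only [Measure.prod_prod, Real.volume_Icc, hsum]
  · calc ENNReal.ofReal (2 * (c - L) * (R - c))
        = (volume.prod volume) (Ioo L c ×ˢ Ioo c R ∪ Ioo c R ×ˢ Ioo L c) := by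
          rw [measure_union hdisj (measurableSet_Ioo.prod measurableSet_Ioo)]
          simp only [Measure.prod_prod, Real.volume_Ioo, hsum]
      _ ≤ (volume.prod volume) E := measure_mono hinner

end Measure

section ApprovalEvent

open Set

variable {W : Finset ℝ} {c : ℝ} {r₁ r₂ : ℕ}

lemma swap_mem_approvalEvent {x y : ℝ} (h : (x, y) ∈ approvalEvent W c r₁ r₂) :
    (y, x) ∈ approvalEvent W c r₁ r₂ := by
  simpa only [approvalEvent, mem_ofPred_eq, min_comm, max_comm] using h

lemma mk_mem_approvalEvent_iff {a b : ℝ} (hab : a ≤ b) :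
    (a, b) ∈ approvalEvent W c r₁ r₂ ↔ (a ≤ c ∧ c ≤ b) ∧
      #(W.filter fun q => a ≤ q ∧ q < c) ≤ r₁ ∧ #(W.filter fun q => c < q ∧ q ≤ b) ≤ r₂ := by
  simp only [approvalEvent, mem_ofPred_eq, min_eq_left hab, max_eq_right hab]
  refine and_congr_right fun ⟨hac, hcb⟩ => ?_
  rw [Finset.filter_congr fun q _ => show q < c ∧ a ≤ q ∧ q ≤ b ↔ a ≤ q ∧ q < c from
      ⟨fun h => ⟨h.2.1, h.1⟩, fun h => ⟨h.2, h.1, h.2.le.trans hcb⟩⟩,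
    Finset.filter_congr fun q _ => show c < q ∧ a ≤ q ∧ q ≤ b ↔ c < q ∧ q ≤ b from
      ⟨fun h => ⟨h.1, h.2.2⟩, fun h => ⟨h.1, hac.trans h.1.le, h.2⟩⟩]

lemma prod_restrict_Icc_approvalEvent_eq_zero {a b : ℝ} (hc : c ∉ Icc a b) :
    ((volume.restrict (Icc a b)).prod (volume.restrict (Icc a b)))
      (approvalEvent W c r₁ r₂) = 0 := by
  rw [Measure.prod_restrict, Measure.restrict_apply' (measurableSet_Icc.prod measurableSet_Icc)]
  have hempty : approvalEvent W c r₁ r₂ ∩ Icc a b ×ˢ Icc a b = ∅ := by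
    refine eq_empty_iff_forall_notMem.2 ?_
    rintro ⟨x, y⟩ ⟨⟨⟨hmin, hmax⟩, -⟩, hx, hy⟩
    exact hc ⟨(le_min hx.1 hy.1).trans hmin, hmax.trans (max_le hx.2 hy.2)⟩
  rw [hempty, measure_empty]

lemma prod_restrict_Icc_approvalEvent (t : ℕ) (hW : ∀ x ∈ W, x ∈ Icc (t : ℝ) (t + 1))
    (hc : c ∈ Icc (t : ℝ) (t + 1)) (hcW : c ∉ W) :
    ((volume.restrict (Icc (t : ℝ) (t + 1))).prod (volume.restrict (Icc (t : ℝ) (t + 1))))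
        (approvalEvent W c r₁ r₂) =
      ENNReal.ofReal (2 * dMinus t W c r₁ * dPlus t #W W c r₂) := by
  rw [Measure.prod_restrict, Measure.restrict_apply' (measurableSet_Icc.prod measurableSet_Icc)]
  have htL : (t : ℝ) ≤ c - dMinus t W c r₁ := le_sub_dMinus fun x hx => (hW x hx).1
  have hRt : c + dPlus t #W W c r₂ ≤ t + 1 := add_dPlus_le fun x hx => (hW x hx).2
  have hsandwich := volume_prod_eq_of_swap_mem
    (E := approvalEvent W c r₁ r₂ ∩ Icc (t : ℝ) (t + 1) ×ˢ Icc (t : ℝ) (t + 1))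
    (sub_le_self c (dMinus_nonneg hc.1)) (le_add_of_nonneg_right (dPlus_nonneg hcW hc.2))
    (fun x y ⟨hE, hx, hy⟩ => ⟨swap_mem_approvalEvent hE, hy, hx⟩)
    (by
      rintro ⟨a, b⟩ ⟨ha, hb⟩
      refine ⟨(mk_mem_approvalEvent_iff (ha.2.le.trans hb.1.le)).2
        ⟨⟨ha.2.le, hb.1.le⟩, card_filter_Ico_le_of_sub_dMinus_lt ha.1 ha.2.le,
          card_filter_Ioc_le_of_lt_add_dPlus hcW hb.2 hb.1.le⟩, ?_, ?_⟩
      · exact ⟨htL.trans ha.1.le, ha.2.le.trans hc.2⟩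
      · exact ⟨hc.1.trans hb.1.le, hb.2.le.trans hRt⟩)
    (by
      rintro x y hxy ⟨hE, hx, hy⟩
      obtain ⟨⟨hxc, hcy⟩, h₁, h₂⟩ := (mk_mem_approvalEvent_iff hxy).1 hE
      exact ⟨⟨sub_dMinus_le_of_card_filter_Ico_le hx.1 hxc h₁, hxc⟩,
        hcy, le_add_dPlus_of_card_filter_Ioc_le hcW hy.2 hcy h₂⟩)
  rw [hsandwich]
  congr 1
  ring

end ApprovalEvent

namespace IsGreedyCommittee

variable {t kt : ℕ} {Ct : Finset ℝ} {w : ℕ → ℝ}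

lemma image_subset (hw : IsGreedyCommittee t kt Ct w) : (Finset.Icc 2 (kt + 1)).image w ⊆ Ct := by
  intro x hx
  obtain ⟨ξ, hξ, rfl⟩ := Finset.mem_image.1 hx
  exact (hw ξ hξ).1

lemma card_image (hw : IsGreedyCommittee t kt Ct w) : #((Finset.Icc 2 (kt + 1)).image w) = kt := by
  have hne : ∀ a ∈ Finset.Icc 2 (kt + 1), ∀ b ∈ Finset.Icc 2 (kt + 1), a < b → w a ≠ w b :=
    fun a ha b hb hab hw_eq => (hw b hb).2.1 <|
      Finset.mem_image.2 ⟨a, Finset.mem_Icc.2 ⟨(Finset.mem_Icc.1 ha).1, by omega⟩, hw_eq⟩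
  rw [Finset.card_image_of_injOn, Nat.card_Icc]
  · omega
  · intro a ha b hb hab
    rcases lt_trichotomy a b with h | h | h
    exacts [absurd hab (hne a ha b hb h), h, absurd hab.symm (hne b hb a ha h)]

end IsGreedyCommittee

theorem riv_greedy_approval_probability_general
    (σ : ℕ) (p : ℕ → ℝ)
    (t : ℕ) (ht : t ∈ Finset.Icc 1 σ)
    (Ct : Finset ℝ) (hCt : ∀ x ∈ Ct, x ∈ Set.Ioo (t : ℝ) (t + 1))
    (kt : ℕ)
    (w : ℕ → ℝ) (hw : IsGreedyCommittee t kt Ct w)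
    (W : Finset ℝ) (hW : W = (Finset.Icc 2 (kt + 1)).image w)
    (c : ℝ) (hcCt : c ∈ Ct) (hcW : c ∉ W)
    (r₁ r₂ : ℕ) :
    rivMeasure σ p (approvalEvent W c r₁ r₂) =
      ENNReal.ofReal (2 * p t * dMinus t W c r₁ * dPlus t kt W c r₂) := by
  have hc := hCt c hcCt
  have hWt : ∀ x ∈ W, x ∈ Set.Icc (t : ℝ) (t + 1) := fun x hx =>
    Set.Ioo_subset_Icc_self (hCt x (hw.image_subset (hW ▸ hx)))
  have hcard : #W = kt := hW ▸ hw.card_image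
  have hother : ∀ s ∈ Finset.Icc 1 σ, s ≠ t →
      (ENNReal.ofReal (p s) • ((volume.restrict (Set.Icc (s : ℝ) (s + 1))).prod
        (volume.restrict (Set.Icc (s : ℝ) (s + 1))))) (approvalEvent W c r₁ r₂) = 0 := by
    intro s _ hst
    rw [Measure.smul_apply, prod_restrict_Icc_approvalEvent_eq_zero, smul_zero]
    rintro ⟨hs, hs1⟩
    have : s < t + 1 := by exact_mod_cast hs.trans_lt hc.2
    have : t < s + 1 := by exact_mod_cast hc.1.trans_le hs1
    omega
  have hprod : 0 ≤ 2 * dMinus t W c r₁ * dPlus t #W W c r₂ :=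
    mul_nonneg (mul_nonneg zero_le_two (dMinus_nonneg hc.1.le)) (dPlus_nonneg hcW hc.2.le)
  rw [rivMeasure, Measure.finsetSum_apply, Finset.sum_eq_single_of_mem t ht hother,
    Measure.smul_apply, smul_eq_mul, prod_restrict_Icc_approvalEvent t hWt
      (Set.Ioo_subset_Icc_self hc) hcW, ← ENNReal.ofReal_mul' hprod, hcard]
  congr 1
  ring

/-- For a candidate `c ∈ C_t ∖ Ŵ_t`, the probability that a random voter of the uniform
RIV model approves `c`, at most `r₁` elements of `Ŵ_t` strictly to the left of `c`, and
at most `r₂` elements of `Ŵ_t` strictly to the right of `c`, equals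
`2 p_t · d⁻_{r₁}(c) · d⁺_{r₂}(c)`. -/
theorem riv_greedy_approval_probability
    (σ : ℕ) (p : ℕ → ℝ)
    (hp0 : ∀ t ∈ Finset.Icc 1 σ, 0 ≤ p t)
    (hpsum : ∑ t ∈ Finset.Icc 1 σ, p t = 1)
    (t : ℕ) (ht : t ∈ Finset.Icc 1 σ)
    (Ct : Finset ℝ) (hCt : ∀ x ∈ Ct, x ∈ Set.Ioo (t : ℝ) (t + 1))
    (kt : ℕ) (hkt : kt ≤ Ct.card)
    (w : ℕ → ℝ) (hw : IsGreedyCommittee t kt Ct w)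
    (W : Finset ℝ) (hW : W = (Finset.Icc 2 (kt + 1)).image w)
    (c : ℝ) (hcCt : c ∈ Ct) (hcW : c ∉ W)
    (r₁ r₂ : ℕ) :
    rivMeasure σ p (approvalEvent W c r₁ r₂) =
      ENNReal.ofReal (2 * p t * dMinus t W c r₁ * dPlus t kt W c r₂) :=
  riv_greedy_approval_probability_general σ p t ht Ct hCt kt w hw W hW c hcCt hcW r₁ r₂
end

section
/- Fix a segment t ∈ {1,…,σ} of a uniform RIV model with segment probability p_t, a finite candidate set C_t ⊂ (t, t+1), and an integer k_t ≥ 0 with |C_t| ≥ k_t, and let Ŵ_t be the greedy committee for segment t. Then for every c ∈ K_t ∖ Ŵ_t and all integers ℓ ≥ 1 and 0 ≤ j ≤ ℓ−1, it holds that π(ℓ, c, j) ≤ 2 p_t ℓ² / (k_t + 2)². -/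
open MeasureTheory

/-! Since `c` is a candidate the greedy rule passed over, every committee member `w ξ` is at least
as close to the marked point `m_ξ` as `c` is, so it lies between `c` and the reflection `2 m_ξ - c`.
Pick `ι` with `m_ι ≤ c < m_{ι+1}`. Then `w (ι+1), …, w (ι+1+r)` lie in `(c, 2 m_{ι+1+r} - c]` and
`w (ι-j), …, w ι` in `[2 m_{ι-j} - c, c)`, so a voter approving `c` and at most `j` members to its
left and `r = ℓ-1-j` to its right has its interval inside `[c - 2A, c + 2B]`, where
`A = c - m_{ι-j}`, `B = m_{ι+1+r} - c` and `A + B = ℓ/(k_t+2)`. Where these indices leave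
`2, …, k_t+1`, the edge of the segment gives the same bound, because `c ∈ K_t` puts the reflections
of `c` in the ghost marks `m_1` and `m_{k_t+2}` outside `[t, t+1]`. The event is thus covered by two
`2A × 2B` rectangles, and `2 · 4AB ≤ 2 (A+B)²`. -/

open Finset

theorem markedPoint_add (t kt ξ n : ℕ) :
    markedPoint t kt (ξ + n) = markedPoint t kt ξ + n / ((kt : ℝ) + 2) := by
  unfold markedPoint
  push_cast
  field_simp
  ring

theorem markedPoint_strictMono (t kt : ℕ) : StrictMono (markedPoint t kt) := by
  intro ξ ζ h
  unfold markedPoint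
  gcongr

theorem markedPoint_mem_Ioo (t kt : ℕ) {ξ : ℕ} (h1 : 1 ≤ ξ) (h2 : ξ ≤ kt + 2) :
    markedPoint t kt ξ ∈ Set.Ioo (t : ℝ) (t + 1) := by
  have h1' : (1 : ℝ) ≤ ξ := by exact_mod_cast h1
  have h2' : (ξ : ℝ) ≤ kt + 2 := by exact_mod_cast h2
  unfold markedPoint
  constructor
  · have : 0 < (2 * (ξ : ℝ) - 1) / (2 * ((kt : ℝ) + 2)) := div_pos (by linarith) (by positivity)
    linarith
  · have : (2 * (ξ : ℝ) - 1) / (2 * ((kt : ℝ) + 2)) < 1 := by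
      rw [div_lt_one (by positivity)]
      linarith
    linarith

theorem exists_markedPoint_le_lt (t kt : ℕ) {c : ℝ} (hc : markedPoint t kt 0 ≤ c) :
    ∃ ι, markedPoint t kt ι ≤ c ∧ c < markedPoint t kt (ι + 1) := by
  have hK : (0 : ℝ) < 2 * ((kt : ℝ) + 2) := by positivity
  have ha : 0 ≤ (c - t) * ((kt : ℝ) + 2) + 1 / 2 := by
    unfold markedPoint at hc
    rw [← le_sub_iff_add_le', div_le_iff₀ hK] at hc
    linarith
  refine ⟨⌊(c - t) * ((kt : ℝ) + 2) + 1 / 2⌋₊, ?_, ?_⟩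
  · have := Nat.floor_le ha
    unfold markedPoint
    rw [← le_sub_iff_add_le', div_le_iff₀ hK]
    linarith
  · have := Nat.lt_floor_add_one ((c - t) * ((kt : ℝ) + 2) + 1 / 2)
    unfold markedPoint
    rw [← sub_lt_iff_lt_add', lt_div_iff₀ hK]
    push_cast
    linarith

theorem mem_segmentMiddle {t kt : ℕ} {Ct : Finset ℝ} {c : ℝ} :
    c ∈ segmentMiddle t kt Ct ↔
      c ∈ Ct ∧ markedPoint t kt 2 < c ∧ c < markedPoint t kt (kt + 1) := by
  have h2 : markedPoint t kt 2 = t + 3 / (2 * ((kt : ℝ) + 2)) := by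
    unfold markedPoint; norm_num
  have hkt : markedPoint t kt (kt + 1) = t + 1 - 3 / (2 * ((kt : ℝ) + 2)) := by
    unfold markedPoint; push_cast; field_simp; ring
  rw [segmentMiddle, mem_filter, h2, hkt]

theorem two_mul_markedPoint_one_sub_le {t kt : ℕ} {c : ℝ} (hc : markedPoint t kt 2 ≤ c) :
    2 * markedPoint t kt 1 - c ≤ t := by
  unfold markedPoint at *
  have : (2 * ((2 : ℕ) : ℝ) - 1) / (2 * ((kt : ℝ) + 2)) =
      2 * ((2 * ((1 : ℕ) : ℝ) - 1) / (2 * ((kt : ℝ) + 2))) + 1 / (2 * ((kt : ℝ) + 2)) := by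
    field_simp; norm_num
  have : 0 < 1 / (2 * ((kt : ℝ) + 2)) := by positivity
  linarith

theorem le_two_mul_markedPoint_sub {t kt : ℕ} {c : ℝ} (hc : c ≤ markedPoint t kt (kt + 1)) :
    (t : ℝ) + 1 ≤ 2 * markedPoint t kt (kt + 2) - c := by
  unfold markedPoint at *
  have : 2 * ((2 * ((kt + 2 : ℕ) : ℝ) - 1) / (2 * ((kt : ℝ) + 2))) =
      1 + (2 * ((kt + 1 : ℕ) : ℝ) - 1) / (2 * ((kt : ℝ) + 2)) + 1 / (2 * ((kt : ℝ) + 2)) := by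
    push_cast; field_simp; ring
  have : 0 < 1 / (2 * ((kt : ℝ) + 2)) := by positivity
  linarith

theorem mem_Ioc_of_abs_sub_le {x c m : ℝ} (h : |x - m| ≤ |c - m|) (hcm : c ≤ m) (hxc : x ≠ c) :
    x ∈ Set.Ioc c (2 * m - c) := by
  rw [abs_sub_comm c, abs_of_nonneg (sub_nonneg.2 hcm)] at h
  obtain ⟨h₁, h₂⟩ := abs_le.1 h
  exact ⟨lt_of_le_of_ne (by linarith) hxc.symm, by linarith⟩

theorem mem_Ico_of_abs_sub_le {x c m : ℝ} (h : |x - m| ≤ |c - m|) (hmc : m ≤ c) (hxc : x ≠ c) :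
    x ∈ Set.Ico (2 * m - c) c := by
  rw [abs_of_nonneg (sub_nonneg.2 hmc)] at h
  obtain ⟨h₁, h₂⟩ := abs_le.1 h
  exact ⟨by linarith, lt_of_le_of_ne (by linarith) hxc⟩

namespace IsGreedyCommittee

variable {t kt : ℕ} {Ct : Finset ℝ} {w : ℕ → ℝ}

theorem injOn (hw : IsGreedyCommittee t kt Ct w) : Set.InjOn w (Icc 2 (kt + 1)) := by
  suffices ∀ ξ ∈ Icc 2 (kt + 1), ∀ ζ ∈ Icc 2 (kt + 1), ζ < ξ → w ζ ≠ w ξ by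
    intro ξ hξ ζ hζ heq
    by_contra hne
    rcases Nat.lt_or_gt_of_ne hne with h | h
    · exact this ζ hζ ξ hξ h heq
    · exact this ξ hξ ζ hζ h heq.symm
  intro ξ hξ ζ hζ hlt heq
  refine (hw ξ hξ).2.1 (mem_image.2 ⟨ζ, ?_, heq⟩)
  rw [mem_Icc] at hζ ⊢
  omega

theorem card_image_Icc (hw : IsGreedyCommittee t kt Ct w) {ξ n : ℕ} (h2 : 2 ≤ ξ)
    (hn : ξ + n ≤ kt + 1) : ((Icc ξ (ξ + n)).image w).card = n + 1 := by
  rw [card_image_of_injOn (hw.injOn.mono (coe_subset.2 (Icc_subset_Icc h2 hn))), Nat.card_Icc]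
  omega

variable {c : ℝ}

theorem abs_sub_markedPoint_le (hw : IsGreedyCommittee t kt Ct w) (hc : c ∈ Ct)
    (hcW : c ∉ (Icc 2 (kt + 1)).image w) {ξ : ℕ} (hξ : ξ ∈ Icc 2 (kt + 1)) :
    |w ξ - markedPoint t kt ξ| ≤ |c - markedPoint t kt ξ| := by
  refine (hw ξ hξ).2.2 c hc fun hc' => hcW (image_subset_image ?_ hc')
  exact Icc_subset_Icc le_rfl (by rw [mem_Icc] at hξ; omega)

theorem lower_bound_of_card_left_le (hw : IsGreedyCommittee t kt Ct w) (hc : c ∈ Ct)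
    (hcW : c ∉ (Icc 2 (kt + 1)).image w) {ξ j : ℕ} (hξ : ξ ≤ kt + 1)
    (hmc : markedPoint t kt ξ ≤ c) {lo hi : ℝ} (hlo : 2 * markedPoint t kt 1 - c ≤ lo)
    (hhi : c ≤ hi)
    (hcount : (((Icc 2 (kt + 1)).image w).filter (fun x => x < c ∧ lo ≤ x ∧ x ≤ hi)).card ≤ j) :
    2 * (markedPoint t kt ξ - j / ((kt : ℝ) + 2)) - c ≤ lo := by
  have hm := (markedPoint_strictMono t kt).monotone
  by_cases hjξ : j + 2 ≤ ξ
  · obtain ⟨ξ₀, rfl⟩ : ∃ ξ₀, ξ = ξ₀ + j := ⟨ξ - j, by omega⟩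
    rw [markedPoint_add, add_sub_cancel_right]
    by_contra! hlt
    -- otherwise the `j + 1` members `w ξ₀, …, w (ξ₀ + j)` all lie in `[lo, c)`
    have hsub : (Icc ξ₀ (ξ₀ + j)).image w ⊆
        ((Icc 2 (kt + 1)).image w).filter (fun x => x < c ∧ lo ≤ x ∧ x ≤ hi) := by
      intro x hx
      obtain ⟨ζ, hζ, rfl⟩ := mem_image.1 hx
      rw [mem_Icc] at hζ
      have hζ' : ζ ∈ Icc 2 (kt + 1) := mem_Icc.2 ⟨by omega, by omega⟩
      obtain ⟨h₁, h₂⟩ := mem_Ico_of_abs_sub_le (hw.abs_sub_markedPoint_le hc hcW hζ')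
        ((hm hζ.2).trans hmc) fun h => hcW (h ▸ mem_image_of_mem w hζ')
      have := hm hζ.1
      exact mem_filter.2 ⟨mem_image_of_mem w hζ', h₂, by linarith, h₂.le.trans hhi⟩
    have := card_le_card hsub
    rw [hw.card_image_Icc (by omega) (by omega)] at this
    omega
  · have : markedPoint t kt ξ ≤ markedPoint t kt 1 + j / ((kt : ℝ) + 2) := by
      rw [← markedPoint_add]
      exact hm (by omega)
    linarith

theorem upper_bound_of_card_right_le (hw : IsGreedyCommittee t kt Ct w) (hc : c ∈ Ct)
    (hcW : c ∉ (Icc 2 (kt + 1)).image w) {ξ r : ℕ} (hξ : 2 ≤ ξ)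
    (hcm : c ≤ markedPoint t kt ξ) {lo hi : ℝ} (hlo : lo ≤ c)
    (hhi : hi ≤ 2 * markedPoint t kt (kt + 2) - c)
    (hcount : (((Icc 2 (kt + 1)).image w).filter (fun x => c < x ∧ lo ≤ x ∧ x ≤ hi)).card ≤ r) :
    hi ≤ 2 * (markedPoint t kt ξ + r / ((kt : ℝ) + 2)) - c := by
  have hm := (markedPoint_strictMono t kt).monotone
  rw [← markedPoint_add]
  by_cases hrξ : ξ + r ≤ kt + 1
  · by_contra! hlt
    -- otherwise the `r + 1` members `w ξ, …, w (ξ + r)` all lie in `(c, hi]`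
    have hsub : (Icc ξ (ξ + r)).image w ⊆
        ((Icc 2 (kt + 1)).image w).filter (fun x => c < x ∧ lo ≤ x ∧ x ≤ hi) := by
      intro x hx
      obtain ⟨ζ, hζ, rfl⟩ := mem_image.1 hx
      rw [mem_Icc] at hζ
      have hζ' : ζ ∈ Icc 2 (kt + 1) := mem_Icc.2 ⟨by omega, by omega⟩
      obtain ⟨h₁, h₂⟩ := mem_Ioc_of_abs_sub_le (hw.abs_sub_markedPoint_le hc hcW hζ')
        (hcm.trans (hm hζ.1)) fun h => hcW (h ▸ mem_image_of_mem w hζ')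
      have := hm hζ.2
      exact mem_filter.2 ⟨mem_image_of_mem w hζ', h₁, hlo.trans h₁.le, by linarith⟩
    have := card_le_card hsub
    rw [hw.card_image_Icc hξ hrξ] at this
    omega
  · have := hm (show kt + 2 ≤ ξ + r by omega)
    linarith

theorem min_max_mem_Icc_of_mem_approvalEvent (hw : IsGreedyCommittee t kt Ct w)
    (hcK : c ∈ segmentMiddle t kt Ct) (hcW : c ∉ (Icc 2 (kt + 1)).image w) {ι j r : ℕ}
    (hιc : markedPoint t kt ι ≤ c) (hcι : c < markedPoint t kt (ι + 1)) {xy : ℝ × ℝ}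
    (hxy : xy ∈ approvalEvent ((Icc 2 (kt + 1)).image w) c j r)
    (hsq : xy ∈ Set.Icc (t : ℝ) (t + 1) ×ˢ Set.Icc (t : ℝ) (t + 1)) :
    min xy.1 xy.2 ∈ Set.Icc (c - 2 * (c - markedPoint t kt ι + j / ((kt : ℝ) + 2))) c ∧
      max xy.1 xy.2 ∈ Set.Icc c (c + 2 * (markedPoint t kt (ι + 1) - c + r / ((kt : ℝ) + 2))) := by
  obtain ⟨hcC, hc2, hckt⟩ := mem_segmentMiddle.1 hcK
  obtain ⟨⟨⟨hmin, hmax⟩, hleft, hright⟩, hx, hy⟩ := And.intro hxy hsq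
  have hm := markedPoint_strictMono t kt
  have hlo := hw.lower_bound_of_card_left_le hcC hcW (hm.lt_iff_lt.1 (hιc.trans_lt hckt)).le hιc
    ((two_mul_markedPoint_one_sub_le hc2.le).trans (le_min hx.1 hy.1)) hmax hleft
  have hhi := hw.upper_bound_of_card_right_le hcC hcW (hm.lt_iff_lt.1 (hc2.trans hcι)).le hcι.le
    hmin ((max_le hx.2 hy.2).trans (le_two_mul_markedPoint_sub hckt.le)) hright
  exact ⟨⟨by linarith, hmin⟩, hmax, by linarith⟩

end IsGreedyCommittee

theorem volume_le_of_forall_min_max {S : Set (ℝ × ℝ)} {c A B : ℝ} (hA : 0 ≤ A) (hB : 0 ≤ B)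
    (hS : ∀ xy ∈ S, min xy.1 xy.2 ∈ Set.Icc (c - 2 * A) c ∧ max xy.1 xy.2 ∈ Set.Icc c (c + 2 * B)) :
    volume S ≤ ENNReal.ofReal (2 * (A + B) ^ 2) := by
  set L := Set.Icc (c - 2 * A) c
  set R := Set.Icc c (c + 2 * B)
  have hsub : S ⊆ L ×ˢ R ∪ R ×ˢ L := by
    intro xy hxy
    obtain ⟨hmin, hmax⟩ := hS xy hxy
    rcases le_total xy.1 xy.2 with h | h
    · rw [min_eq_left h] at hmin
      rw [max_eq_right h] at hmax
      exact Or.inl ⟨hmin, hmax⟩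
    · rw [min_eq_right h] at hmin
      rw [max_eq_left h] at hmax
      exact Or.inr ⟨hmax, hmin⟩
  calc volume S ≤ volume (L ×ˢ R ∪ R ×ˢ L) := measure_mono hsub
    _ ≤ volume (L ×ˢ R) + volume (R ×ˢ L) := measure_union_le _ _
    _ = ENNReal.ofReal (2 * (2 * A * (2 * B))) := by
        rw [Measure.volume_eq_prod, Measure.prod_prod, Measure.prod_prod, Real.volume_Icc,
          Real.volume_Icc, sub_sub_cancel, add_sub_cancel_left,
          ← ENNReal.ofReal_mul (by positivity), ← ENNReal.ofReal_mul (by positivity),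
          mul_comm (2 * B), ← ENNReal.ofReal_add (by positivity) (by positivity)]
        congr 1
        ring
    _ ≤ ENNReal.ofReal (2 * (A + B) ^ 2) := by
        gcongr
        nlinarith [four_mul_le_sq_add A B]

theorem rivMeasure_apply_eq {σ t : ℕ} (p : ℕ → ℝ) (ht : t ∈ Icc 1 σ) {c : ℝ}
    (hc : c ∈ Set.Ioo (t : ℝ) (t + 1)) {S : Set (ℝ × ℝ)}
    (hS : ∀ xy ∈ S, min xy.1 xy.2 ≤ c ∧ c ≤ max xy.1 xy.2) :
    rivMeasure σ p S =
      ENNReal.ofReal (p t) * volume (S ∩ Set.Icc (t : ℝ) (t + 1) ×ˢ Set.Icc (t : ℝ) (t + 1)) := by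
  have hsq : ∀ u : ℕ, ((volume.restrict (Set.Icc (u : ℝ) (u + 1))).prod
      (volume.restrict (Set.Icc (u : ℝ) (u + 1)))) S =
        volume (S ∩ Set.Icc (u : ℝ) (u + 1) ×ˢ Set.Icc (u : ℝ) (u + 1)) := fun u => by
    rw [Measure.prod_restrict, Measure.restrict_apply' (measurableSet_Icc.prod measurableSet_Icc),
      Measure.volume_eq_prod]
  have hdisj : ∀ u : ℕ, u ≠ t → S ∩ Set.Icc (u : ℝ) (u + 1) ×ˢ Set.Icc (u : ℝ) (u + 1) = ∅ := by
    intro u hut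
    refine Set.eq_empty_iff_forall_notMem.2 fun xy ⟨hxy, hx, hy⟩ => ?_
    obtain ⟨hmin, hmax⟩ := hS xy hxy
    rcases Nat.lt_or_gt_of_ne hut with h | h
    · have : (u : ℝ) + 1 ≤ t := by exact_mod_cast h
      linarith [hc.1, max_le hx.2 hy.2]
    · have : (t : ℝ) + 1 ≤ u := by exact_mod_cast h
      linarith [hc.2, le_min hx.1 hy.1]
  rw [rivMeasure, Measure.finsetSum_apply, sum_eq_single_of_mem t ht]
  · rw [Measure.smul_apply, hsq, smul_eq_mul]
  · intro u _ hut
    rw [Measure.smul_apply, hsq, hdisj u hut, measure_empty, smul_zero]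

theorem riv_pi_bound_middle_general
    (σ : ℕ) (p : ℕ → ℝ)
    (t : ℕ) (ht : t ∈ Finset.Icc 1 σ)
    (Ct : Finset ℝ)
    (kt : ℕ)
    (w : ℕ → ℝ) (hw : IsGreedyCommittee t kt Ct w)
    (W : Finset ℝ) (hW : W = (Finset.Icc 2 (kt + 1)).image w)
    (c : ℝ) (hcK : c ∈ segmentMiddle t kt Ct) (hcW : c ∉ W)
    (ℓ j : ℕ) (hℓ : 1 ≤ ℓ) (hj : j ≤ ℓ - 1) :
    rivMeasure σ p (approvalEvent W c j (ℓ - 1 - j)) ≤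
      ENNReal.ofReal (2 * p t * (ℓ : ℝ) ^ 2 / ((kt : ℝ) + 2) ^ 2) := by
  subst hW
  obtain ⟨-, hc2, hckt⟩ := mem_segmentMiddle.1 hcK
  obtain ⟨ι, hιc, hcι⟩ := exists_markedPoint_le_lt t kt
    (((markedPoint_strictMono t kt).monotone (Nat.zero_le 2)).trans hc2.le)
  set r := ℓ - 1 - j
  set A := c - markedPoint t kt ι + j / ((kt : ℝ) + 2)
  set B := markedPoint t kt (ι + 1) - c + r / ((kt : ℝ) + 2)
  have hAB : A + B = ℓ / ((kt : ℝ) + 2) := by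
    have hℓ' : (ℓ : ℝ) = 1 + j + r := by norm_cast; omega
    simp only [A, B, markedPoint_add, hℓ']
    push_cast
    ring
  have hct : c ∈ Set.Ioo (t : ℝ) (t + 1) :=
    ⟨(markedPoint_mem_Ioo t kt one_le_two (by omega)).1.trans hc2,
      hckt.trans (markedPoint_mem_Ioo t kt (by omega) (by omega)).2⟩
  rw [rivMeasure_apply_eq p ht hct fun xy hxy => hxy.1]
  calc _ ≤ ENNReal.ofReal (p t) * ENNReal.ofReal (2 * (A + B) ^ 2) := by
        gcongr
        exact volume_le_of_forall_min_max (add_nonneg (sub_nonneg.2 hιc) (by positivity))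
          (add_nonneg (sub_nonneg.2 hcι.le) (by positivity))
          fun xy ⟨hxy, hsq⟩ => hw.min_max_mem_Icc_of_mem_approvalEvent hcK hcW hιc hcι hxy hsq
    _ = _ := by
        rw [← ENNReal.ofReal_mul' (by positivity), hAB, div_pow]
        congr 1
        ring

/-- For a candidate `c ∈ K_t ∖ Ŵ_t`, integers `ℓ ≥ 1` and `0 ≤ j ≤ ℓ−1`, the probability
`π(ℓ, c, j)` (that a random voter approves `c`, at most `j` elements of `Ŵ_t` strictly
to the left of `c`, and at most `ℓ−1−j` elements strictly to the right of `c`) is at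
most `2 p_t ℓ² / (k_t + 2)²`. -/
theorem riv_pi_bound_middle
    (σ : ℕ) (p : ℕ → ℝ)
    (hp0 : ∀ t ∈ Finset.Icc 1 σ, 0 ≤ p t)
    (hpsum : ∑ t ∈ Finset.Icc 1 σ, p t = 1)
    (t : ℕ) (ht : t ∈ Finset.Icc 1 σ)
    (Ct : Finset ℝ) (hCt : ∀ x ∈ Ct, x ∈ Set.Ioo (t : ℝ) (t + 1))
    (kt : ℕ) (hkt : kt ≤ Ct.card)
    (w : ℕ → ℝ) (hw : IsGreedyCommittee t kt Ct w)
    (W : Finset ℝ) (hW : W = (Finset.Icc 2 (kt + 1)).image w)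
    (c : ℝ) (hcK : c ∈ segmentMiddle t kt Ct) (hcW : c ∉ W)
    (ℓ j : ℕ) (hℓ : 1 ≤ ℓ) (hj : j ≤ ℓ - 1) :
    rivMeasure σ p (approvalEvent W c j (ℓ - 1 - j)) ≤
      ENNReal.ofReal (2 * p t * (ℓ : ℝ) ^ 2 / ((kt : ℝ) + 2) ^ 2) :=
  riv_pi_bound_middle_general σ p t ht Ct kt w hw W hW c hcK hcW ℓ j hℓ hj
end

section
/- Let X and Y be independent random variables, each uniformly distributed on [0,1]. For an integer i ≥ 0 let G_i = { j/2^i : j = 1,…,2^i }. Then for every integer r ≥ 1, Pr[ G_r ∩ [min(X,Y), max(X,Y)] ≠ ∅ and G_{r−1} ∩ [min(X,Y), max(X,Y)] = ∅ ] = 2^{−r}. -/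
open MeasureTheory ProbabilityTheory
open scoped ENNReal

open Set

/-! Off a null set neither endpoint lies on the grid of mesh `1/(2N)`, and then `[min, max]` meets
that grid iff the endpoints lie in different cells `[i/(2N), (i+1)/(2N))`, and meets the grid of
mesh `1/N` iff they lie in different cells of mesh `1/N`. So the event is that `Y` falls in the
sibling of the cell of `X` (the other half of the same parent cell), which given `X` has
probability `1/(2N)`. -/

lemma ProbabilityTheory.IndepFun.measure_preimage_prodMk {Ω α β : Type*} [MeasurableSpace Ω]
    [MeasurableSpace α] [MeasurableSpace β] {P : Measure Ω} [IsFiniteMeasure P]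
    {X : Ω → α} {Y : Ω → β}
    (hX : AEMeasurable X P) (hY : AEMeasurable Y P) (hXY : IndepFun X Y P) {S : Set (α × β)}
    (hS : NullMeasurableSet S ((P.map X).prod (P.map Y))) :
    P ((fun ω => (X ω, Y ω)) ⁻¹' S) = (P.map X).prod (P.map Y) S := by
  rw [← (indepFun_iff_map_prod_eq_prod_map_map hX hY).mp hXY] at hS ⊢
  exact (Measure.map_apply₀ (hX.prodMk hY) hS).symm

local notation "𝕌" => volume.restrict (Icc (0 : ℝ) 1)

def HitsGrid (n : ℕ) (a b : ℝ) : Prop :=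
  ∃ j ∈ Finset.Icc 1 n, a ≤ (j : ℝ) / n ∧ (j : ℝ) / n ≤ b

lemma hitsGrid_iff_floor_lt {n : ℕ} {a b : ℝ} (hn : 0 < n) (ha : 0 ≤ a) (hb : b ≤ 1)
    (ha_grid : ∀ j : ℕ, (j : ℝ) / n ≠ a) :
    HitsGrid n a b ↔ ⌊n * a⌋₊ < ⌊n * b⌋₊ := by
  have hn' : (0 : ℝ) < n := Nat.cast_pos.mpr hn
  constructor
  · rintro ⟨j, -, haj, hjb⟩
    have haj' : n * a < j := by
      rw [← lt_div_iff₀' hn']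
      exact lt_of_le_of_ne haj (ha_grid j).symm
    calc ⌊n * a⌋₊ < j := (Nat.floor_lt (by positivity)).mpr haj'
      _ ≤ ⌊n * b⌋₊ := Nat.le_floor (by rwa [div_le_iff₀' hn'] at hjb)
  · intro h
    have h' : (⌊n * a⌋₊ + 1 : ℝ) ≤ n * b := by
      exact_mod_cast (Nat.le_floor_iff' (Nat.succ_ne_zero _)).mp h
    refine ⟨⌊n * a⌋₊ + 1, Finset.mem_Icc.mpr ⟨le_add_self, ?_⟩, ?_, ?_⟩
    · have hnb : (n : ℝ) * b ≤ n := mul_le_of_le_one_right hn'.le hb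
      exact_mod_cast h'.trans hnb
    · rw [le_div_iff₀' hn']; push_cast; exact (Nat.lt_floor_add_one _).le
    · rw [div_le_iff₀' hn']; push_cast; exact h'

/-- `i + 1` for even `i` and `i - 1` for odd `i`: the cells `[i/n, (i+1)/n)` of indices `2k` and
`2k + 1` make up one cell of the grid of half the resolution. -/
def dyadicSibling (i : ℕ) : ℕ := i + 1 - 2 * (i % 2)

def firstGridHit (N : ℕ) : Set (ℝ × ℝ) :=
  {p | HitsGrid (2 * N) (min p.1 p.2) (max p.1 p.2) ∧ ¬ HitsGrid N (min p.1 p.2) (max p.1 p.2)}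

def siblingCells (n : ℕ) : Set (ℝ × ℝ) :=
  {p | ⌊n * p.2⌋₊ = dyadicSibling ⌊n * p.1⌋₊}

lemma measurableSet_siblingCells (n : ℕ) : MeasurableSet (siblingCells n) :=
  have hcell : Measurable fun p : ℝ × ℝ => ⌊n * p.1⌋₊ := by fun_prop
  measurableSet_eq_fun (by fun_prop) ((measurable_from_top (f := dyadicSibling)).comp hcell)

lemma mem_firstGridHit_iff {N : ℕ} {x y : ℝ} (hN : 0 < N)
    (hx : x ∈ Icc 0 1) (hy : y ∈ Icc 0 1) (hx_grid : ∀ j : ℕ, (j : ℝ) / (2 * N : ℕ) ≠ x)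
    (hy_grid : ∀ j : ℕ, (j : ℝ) / (2 * N : ℕ) ≠ y) :
    (x, y) ∈ firstGridHit N ↔ (x, y) ∈ siblingCells (2 * N) := by
  have hm_grid : ∀ j : ℕ, (j : ℝ) / (2 * N : ℕ) ≠ min x y := by
    rcases min_choice x y with h | h <;> rwa [h]
  have hm_grid' (j : ℕ) : (j : ℝ) / N ≠ min x y := by
    convert hm_grid (2 * j) using 1
    push_cast
    rw [mul_div_mul_left _ _ two_ne_zero]
  have hm0 : 0 ≤ min x y := le_min hx.1 hy.1
  have hM1 : max x y ≤ 1 := max_le hx.2 hy.2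
  have hmono : Monotone fun t : ℝ => ⌊((2 * N : ℕ) : ℝ) * t⌋₊ :=
    Nat.floor_mono.comp (monotone_mul_left_of_nonneg (Nat.cast_nonneg _))
  have halve (t : ℝ) : ⌊(N : ℝ) * t⌋₊ = ⌊((2 * N : ℕ) : ℝ) * t⌋₊ / 2 := by
    rw [← Nat.floor_div_natCast]
    push_cast
    ring_nf
  simp only [firstGridHit, siblingCells, mem_ofPred_eq]
  rw [hitsGrid_iff_floor_lt (by omega) hm0 hM1 hm_grid, hitsGrid_iff_floor_lt hN hm0 hM1 hm_grid',
    halve, halve, hmono.map_min, hmono.map_max, dyadicSibling]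
  omega

lemma ae_mem_Icc_and_ne_grid (n : ℕ) :
    ∀ᵐ x ∂𝕌, x ∈ Icc 0 1 ∧ ∀ j : ℕ, (j : ℝ) / n ≠ x := by
  filter_upwards [ae_restrict_mem measurableSet_Icc,
    (countable_range fun j : ℕ => (j : ℝ) / n).ae_notMem _] with x hx hx_grid
  exact ⟨hx, fun j hj => hx_grid ⟨j, hj⟩⟩

lemma firstGridHit_ae_eq_siblingCells {N : ℕ} (hN : 0 < N) :
    firstGridHit N =ᵐ[(𝕌).prod 𝕌] siblingCells (2 * N) := by
  rw [Filter.eventuallyEq_set]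
  filter_upwards [Measure.quasiMeasurePreserving_fst.ae (ae_mem_Icc_and_ne_grid (2 * N)),
    Measure.quasiMeasurePreserving_snd.ae (ae_mem_Icc_and_ne_grid (2 * N))] with p hp1 hp2
  exact mem_firstGridHit_iff hN hp1.1 hp2.1 hp1.2 hp2.2

lemma volume_restrict_Icc_floor_mul_eq {n i : ℕ} (hi : i < n) :
    𝕌 {x | ⌊n * x⌋₊ = i} = (n : ℝ≥0∞)⁻¹ := by
  have hn : (0 : ℝ) < n := by exact_mod_cast (Nat.zero_le i).trans_lt hi
  have hcell : {x : ℝ | ⌊n * x⌋₊ = i} ∩ Icc 0 1 = Ico ((i : ℝ) / n) ((i + 1) / n) := by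
    ext x
    simp only [mem_inter_iff, mem_ofPred_eq, mem_Icc, mem_Ico, div_le_iff₀' hn, lt_div_iff₀' hn]
    constructor
    · rintro ⟨hfloor, hx0, -⟩
      exact (Nat.floor_eq_iff (by positivity)).mp hfloor
    · rintro ⟨hix, hxi⟩
      have hi' : (i + 1 : ℝ) ≤ n := by exact_mod_cast hi
      have hnx : 0 ≤ (n : ℝ) * x := (Nat.cast_nonneg i).trans hix
      refine ⟨(Nat.floor_eq_iff hnx).mpr ⟨hix, hxi⟩, ?_, ?_⟩ <;> nlinarith
  have hmeas : MeasurableSet {x : ℝ | ⌊n * x⌋₊ = i} :=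
    measurableSet_eq_fun (by fun_prop) measurable_const
  rw [Measure.restrict_apply hmeas, hcell, Real.volume_Ico,
    show ((i : ℝ) + 1) / n - i / n = (n : ℝ)⁻¹ by ring, ENNReal.ofReal_inv_of_pos hn,
    ENNReal.ofReal_natCast]

lemma floor_mul_lt_of_ne_grid {n : ℕ} {x : ℝ} (hn : 0 < n) (hx : x ∈ Icc 0 1)
    (hx_grid : ∀ j : ℕ, (j : ℝ) / n ≠ x) : ⌊n * x⌋₊ < n := by
  have hn' : (0 : ℝ) < n := Nat.cast_pos.mpr hn
  have hx1 : x < 1 := lt_of_le_of_ne hx.2 (by simpa [hn'.ne'] using (hx_grid n).symm)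
  exact (Nat.floor_lt (mul_nonneg hn'.le hx.1)).mpr (mul_lt_of_lt_one_right hn' hx1)

lemma volume_restrict_Icc_prod_siblingCells {N : ℕ} (hN : 0 < N) :
    (𝕌).prod 𝕌 (siblingCells (2 * N)) = ((2 * N : ℕ) : ℝ≥0∞)⁻¹ := by
  rw [Measure.prod_apply (measurableSet_siblingCells _)]
  have hslice :
      ∀ᵐ x ∂𝕌, 𝕌 (Prod.mk x ⁻¹' siblingCells (2 * N)) = ((2 * N : ℕ) : ℝ≥0∞)⁻¹ := by
    filter_upwards [ae_mem_Icc_and_ne_grid (2 * N)] with x hx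
    have hfloor := floor_mul_lt_of_ne_grid (by omega) hx.1 hx.2
    have hsibling : dyadicSibling ⌊((2 * N : ℕ) : ℝ) * x⌋₊ < 2 * N := by
      unfold dyadicSibling; omega
    exact volume_restrict_Icc_floor_mul_eq hsibling
  rw [lintegral_congr_ae hslice, lintegral_const, Measure.restrict_apply_univ, Real.volume_Icc]
  simp

/-- For `X, Y` i.i.d. uniform on `[0,1]` and the dyadic grids
`G_i = {j/2^i : j = 1,…,2^i}`, the probability that `[min(X,Y), max(X,Y)]` meets `G_r`
but not `G_{r−1}` equals `2^{−r}`, for every `r ≥ 1`. -/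
theorem prob_first_dyadic_grid_hit
    {Ω : Type*} [MeasurableSpace Ω] (P : Measure Ω) [IsProbabilityMeasure P]
    (X Y : Ω → ℝ) (hX : Measurable X) (hY : Measurable Y)
    (hXunif : P.map X = volume.restrict (Set.Icc (0 : ℝ) 1))
    (hYunif : P.map Y = volume.restrict (Set.Icc (0 : ℝ) 1))
    (hindep : IndepFun X Y P)
    (r : ℕ) (hr : 1 ≤ r) :
    P {ω | (∃ j ∈ Finset.Icc (1 : ℕ) (2 ^ r),
          min (X ω) (Y ω) ≤ (j : ℝ) / 2 ^ r ∧ (j : ℝ) / 2 ^ r ≤ max (X ω) (Y ω)) ∧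
        ¬ (∃ j ∈ Finset.Icc (1 : ℕ) (2 ^ (r - 1)),
          min (X ω) (Y ω) ≤ (j : ℝ) / 2 ^ (r - 1) ∧ (j : ℝ) / 2 ^ (r - 1) ≤ max (X ω) (Y ω))} =
      (2 ^ r : ℝ≥0∞)⁻¹ := by
  obtain ⟨s, rfl⟩ : ∃ s, r = s + 1 := ⟨r - 1, by omega⟩
  have hN : 0 < 2 ^ s := by positivity
  have hae := firstGridHit_ae_eq_siblingCells hN
  have hnull : NullMeasurableSet (firstGridHit (2 ^ s)) ((P.map X).prod (P.map Y)) := by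
    rw [hXunif, hYunif]
    exact (measurableSet_siblingCells _).nullMeasurableSet.congr hae.symm
  calc _ = P ((fun ω => (X ω, Y ω)) ⁻¹' firstGridHit (2 ^ s)) := by
        congr 1
        ext ω
        simp [firstGridHit, HitsGrid, pow_succ']
    _ = (𝕌).prod 𝕌 (siblingCells (2 * 2 ^ s)) := by
        rw [hindep.measure_preimage_prodMk hX.aemeasurable hY.aemeasurable hnull, hXunif, hYunif,
          measure_congr hae]
    _ = (2 ^ (s + 1) : ℝ≥0∞)⁻¹ := by
        rw [volume_restrict_Icc_prod_siblingCells hN, pow_succ']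
        push_cast
        rfl
end
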